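/- arXiv:1205.2858 — 3 statements merged into one kernel-verified Lean document; each statement's English description precedes it below -/
import Mathlib

section
/- Let Λ be a k-graph. The equivalence relation ∼ on the disjoint union ⨆_{λ ∈ Λ} {λ} × [0, d(λ)] defined by (μ,s) ∼ (ν,t) iff μ(⌊s⌋,⌈s⌉) = ν(⌊t⌋,⌈t⌉) and s − ⌊s⌋ = t − ⌊t⌋ is generated, as an equivalence relation, by the set of pairs {((αλβ, t + d(α)), (λ, t)) : λ ∈ Λ with d(λ) ≤ 1_k, α, β ∈ Λ with s(α) = r(λ) and r(β) = s(λ), and t ∈ [0, d(λ)]}. -/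
/-- A `k`-graph: a countable small category (objects identified with the
identity morphisms, i.e. the morphisms of degree `0`) equipped with a degree
functor `d : Λ → ℕᵏ` satisfying the unique factorization property. -/
structure KGraph (k : ℕ) where
  /-- The morphisms of the category. -/
  Mor : Type
  /-- The category is countable. -/
  countable : Countable Mor
  /-- The source (domain) of a morphism, viewed as a degree-zero morphism. -/
  src : Mor → Mor
  /-- The range (codomain) of a morphism, viewed as a degree-zero morphism. -/
  rng : Mor → Mor
  /-- Composition `comp a b = a ∘ b`, meaningful when `src a = rng b`. -/
  comp : Mor → Mor → Mor
  /-- The degree functor. -/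
  deg : Mor → Fin k → ℕ
  src_src : ∀ a, src (src a) = src a
  rng_src : ∀ a, rng (src a) = src a
  src_rng : ∀ a, src (rng a) = rng a
  rng_rng : ∀ a, rng (rng a) = rng a
  deg_src : ∀ a, deg (src a) = 0
  deg_rng : ∀ a, deg (rng a) = 0
  src_comp : ∀ a b, src a = rng b → src (comp a b) = src b
  rng_comp : ∀ a b, src a = rng b → rng (comp a b) = rng a
  comp_assoc : ∀ a b c, src a = rng b → src b = rng c →
    comp (comp a b) c = comp a (comp b c)
  id_comp : ∀ a, comp (rng a) a = a
  comp_id : ∀ a, comp a (src a) = a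
  deg_comp : ∀ a b, src a = rng b → deg (comp a b) = deg a + deg b
  /-- The unique factorization property. -/
  factor : ∀ (a : Mor) (m n : Fin k → ℕ), deg a = m + n →
    ∃! p : Mor × Mor, deg p.1 = m ∧ deg p.2 = n ∧ src p.1 = rng p.2 ∧
      comp p.1 p.2 = a

namespace KGraph

variable {k : ℕ} (Λ : KGraph k)

/-- The segment `a(m,n)` of a morphism `a`, i.e. the (unique) middle factor of
`a = a(0,m) a(m,n) a(n, d(a))`; junk value `a` if no such factorization exists. -/
noncomputable def seg (a : Λ.Mor) (m n : Fin k → ℕ) : Λ.Mor :=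
  letI := Classical.propDecidable
  if h : ∃ b : Λ.Mor, Λ.deg b = n - m ∧ ∃ x y : Λ.Mor,
      Λ.deg x = m ∧ Λ.src x = Λ.rng b ∧ Λ.src b = Λ.rng y ∧
      a = Λ.comp x (Λ.comp b y)
  then h.choose else a

/-- The points `⨆_{λ ∈ Λ} {λ} × [0, d(λ)]` of which the topological
realization is a quotient; topologized as a disjoint union of subspaces of `ℝᵏ`. -/
def Points : Type :=
  Σ a : Λ.Mor, { t : Fin k → ℝ // ∀ i, 0 ≤ t i ∧ t i ≤ (Λ.deg a i : ℝ) }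

instance : TopologicalSpace Λ.Points :=
  inferInstanceAs (TopologicalSpace
    (Σ a : Λ.Mor, { t : Fin k → ℝ // ∀ i, 0 ≤ t i ∧ t i ≤ (Λ.deg a i : ℝ) }))

/-- Coordinatewise floor `⌊t⌋` (as a vector of naturals; this is the honest
floor on the relevant region `t ≥ 0`). -/
noncomputable def fl (t : Fin k → ℝ) : Fin k → ℕ := fun i => (⌊t i⌋).toNat

/-- Coordinatewise ceiling `⌈t⌉`. -/
noncomputable def ce (t : Fin k → ℝ) : Fin k → ℕ := fun i => (⌈t i⌉).toNat

/-- The fractional part `t - ⌊t⌋`. -/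
noncomputable def frac (t : Fin k → ℝ) : Fin k → ℝ := fun i => t i - ((⌊t i⌋).toNat : ℝ)

/-- The relation `(μ,s) ∼ (ν,t) ⟺ μ(⌊s⌋,⌈s⌉) = ν(⌊t⌋,⌈t⌉)` and
`s - ⌊s⌋ = t - ⌊t⌋` defining the topological realization. -/
def ptRel : Λ.Points → Λ.Points → Prop := fun p q =>
  Λ.seg p.1 (fl p.2.1) (ce p.2.1) = Λ.seg q.1 (fl q.2.1) (ce q.2.1) ∧
    frac p.2.1 = frac q.2.1

/-- `ptRel` is an equivalence relation. -/
def ptSetoid : Setoid Λ.Points where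
  r := Λ.ptRel
  iseqv := ⟨fun _ => ⟨rfl, rfl⟩, fun h => ⟨h.1.symm, h.2.symm⟩,
    fun h h' => ⟨h.1.trans h'.1, h.2.trans h'.2⟩⟩

/-- The topological realization `X_Λ` of the `k`-graph `Λ`. -/
def Real : Type := Quotient Λ.ptSetoid

instance : TopologicalSpace Λ.Real :=
  inferInstanceAs (TopologicalSpace (Quotient Λ.ptSetoid))

/-- The class `[λ, t] ∈ X_Λ` of a pair `(λ, t)` with `0 ≤ t ≤ d(λ)`. -/
def pt (a : Λ.Mor) (t : Fin k → ℝ) (h : ∀ i, 0 ≤ t i ∧ t i ≤ (Λ.deg a i : ℝ)) :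
    Λ.Real :=
  Quotient.mk Λ.ptSetoid ⟨a, ⟨t, h⟩⟩

/-- The open cube `Q_λ = {[λ,t] : t ∈ (0, d(λ))}` of a morphism `λ` (of degree
`≤ (1,…,1)`). -/
def Qcube (lam : Λ.Mor) : Set Λ.Real :=
  { x | ∃ (t : Fin k → ℝ) (h : ∀ i, 0 ≤ t i ∧ t i ≤ (Λ.deg lam i : ℝ)),
      (∀ i, Λ.deg lam i = 1 → 0 < t i ∧ t i < 1) ∧ x = Λ.pt lam t h }

/-- The `r`-skeleton `X_Λ^r` of the topological realization. -/
def skel' (G : KGraph k) : ℕ → Set G.Real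
  | 0 => ⋃ v ∈ { v : G.Mor | G.deg v = 0 }, G.Qcube v
  | (r+1) => skel' G r ∪
      ⋃ lam ∈ { lam : G.Mor | G.deg lam ≤ 1 ∧ ∑ i, G.deg lam i = r + 1 },
        G.Qcube lam

/-- The `r`-skeleton (wrapper). -/
def skel (r : ℕ) : Set Λ.Real := skel' Λ r

/-- A `k`-graph is connected if any two vertices are joined by an undirected
path of morphisms. -/
def Connected : Prop :=
  ∀ u v : Λ.Mor, Λ.deg u = 0 → Λ.deg v = 0 →
    Relation.ReflTransGen (fun x y => ∃ e : Λ.Mor,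
      (Λ.src e = x ∧ Λ.rng e = y) ∨ (Λ.src e = y ∧ Λ.rng e = x)) u v

end KGraph

/-- A morphism of `k`-graphs: a degree-preserving functor. -/
@[ext]
structure KGraphHom {k : ℕ} (Λ Γ : KGraph k) where
  toFun : Λ.Mor → Γ.Mor
  map_src : ∀ a, toFun (Λ.src a) = Γ.src (toFun a)
  map_rng : ∀ a, toFun (Λ.rng a) = Γ.rng (toFun a)
  map_comp : ∀ a b, Λ.src a = Λ.rng b →
    toFun (Λ.comp a b) = Γ.comp (toFun a) (toFun b)
  map_deg : ∀ a, Γ.deg (toFun a) = Λ.deg a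

namespace KGraphHom

variable {k : ℕ} {Λ Γ Θ : KGraph k}

/-- The identity `k`-graph morphism. -/
def id (Λ : KGraph k) : KGraphHom Λ Λ :=
  ⟨fun a => a, fun _ => rfl, fun _ => rfl, fun _ _ _ => rfl, fun _ => rfl⟩

/-- Composition of `k`-graph morphisms. -/
def comp (ψ : KGraphHom Γ Θ) (φ : KGraphHom Λ Γ) : KGraphHom Λ Θ where
  toFun := ψ.toFun ∘ φ.toFun
  map_src a := by simp [Function.comp, φ.map_src, ψ.map_src]
  map_rng a := by simp [Function.comp, φ.map_rng, ψ.map_rng]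
  map_comp a b h := by
    simp only [Function.comp]
    rw [φ.map_comp a b h, ψ.map_comp _ _ (by rw [← φ.map_src, ← φ.map_rng, h])]
  map_deg a := by simp [Function.comp, φ.map_deg, ψ.map_deg]

/-- The induced map on points `(λ, t) ↦ (φ(λ), t)`. -/
def pointMap (φ : KGraphHom Λ Γ) : Λ.Points → Γ.Points :=
  fun p => ⟨φ.toFun p.1, ⟨p.2.1, fun i => by rw [φ.map_deg]; exact p.2.2 i⟩⟩

/-- The induced map `φ̃ : X_Λ → X_Γ` on topological realizations,
`φ̃([λ,t]) = [φ(λ), t]` (defined via choice of representatives). -/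
noncomputable def real (φ : KGraphHom Λ Γ) : Λ.Real → Γ.Real :=
  fun x => Quotient.mk Γ.ptSetoid (φ.pointMap (Quotient.out x))

end KGraphHom

/-- A covering of `k`-graphs: a surjective degree-preserving functor
`p : Ω → Λ` mapping `Ωv` bijectively onto `Λp(v)` and `vΩ` bijectively onto
`p(v)Λ` for every vertex `v` of `Ω`. -/
def KGraphHom.IsCovering {k : ℕ} {Ω Λ : KGraph k} (p : KGraphHom Ω Λ) : Prop :=
  Function.Surjective p.toFun ∧
    ∀ v : Ω.Mor, Ω.deg v = 0 →
      Set.BijOn p.toFun { a | Ω.src a = v } { b | Λ.src b = p.toFun v } ∧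
      Set.BijOn p.toFun { a | Ω.rng a = v } { b | Λ.rng b = p.toFun v }

/-!
Both relations are compared through a normal form: a point `(μ, s)` is a generating pair away
from `(μ(⌊s⌋, ⌈s⌉), s - ⌊s⌋)`, with `α = μ(0, ⌊s⌋)` and `β = μ(⌈s⌉, d(μ))`, and two points are
`∼`-related exactly when these normal forms coincide. Conversely a generating pair is `∼`-related
because shifting `t` by `d(α)` shifts `⌊t⌋` and `⌈t⌉` by `d(α)` and leaves `t - ⌊t⌋` alone, while
`(αλβ)(m + d(α), n + d(α)) = λ(m, n)` by unique factorization.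
-/

namespace KGraph

variable {k : ℕ}

section Factorization

variable (Λ : KGraph k)

theorem eq_and_eq_of_comp_eq {x y x' y' : Λ.Mor} (hxy : Λ.src x = Λ.rng y)
    (hxy' : Λ.src x' = Λ.rng y') (hdeg : Λ.deg x = Λ.deg x')
    (h : Λ.comp x y = Λ.comp x' y') : x = x' ∧ y = y' := by
  have hdeg_y : Λ.deg y = Λ.deg y' := by
    have hsum := Λ.deg_comp x y hxy
    rw [h, Λ.deg_comp x' y' hxy', hdeg] at hsum
    exact (add_left_cancel hsum).symm
  obtain ⟨_, -, huniq⟩ := Λ.factor (Λ.comp x y) (Λ.deg x) (Λ.deg y) (Λ.deg_comp x y hxy)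
  exact Prod.ext_iff.1 <| (huniq (x, y) ⟨rfl, rfl, hxy, rfl⟩).trans
    (huniq (x', y') ⟨hdeg.symm, hdeg_y.symm, hxy', h.symm⟩).symm

theorem exists_comp_comp {a : Λ.Mor} {m n : Fin k → ℕ} (hmn : m ≤ n) (hn : n ≤ Λ.deg a) :
    ∃ b : Λ.Mor, Λ.deg b = n - m ∧ ∃ x y : Λ.Mor,
      Λ.deg x = m ∧ Λ.src x = Λ.rng b ∧ Λ.src b = Λ.rng y ∧
      a = Λ.comp x (Λ.comp b y) := by
  obtain ⟨⟨x, c⟩, ⟨hx, hc, hxc, hxc_eq⟩, -⟩ :=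
    Λ.factor a m (Λ.deg a - m) (add_tsub_cancel_of_le (hmn.trans hn)).symm
  obtain ⟨⟨b, y⟩, ⟨hb, -, hby, rfl⟩, -⟩ := Λ.factor c (n - m) (Λ.deg a - n) <| by
    rw [hc, ← tsub_tsub_tsub_cancel_right hmn]
    exact (add_tsub_cancel_of_le (tsub_le_tsub_right hn m)).symm
  refine ⟨b, hb, x, y, hx, ?_, hby, hxc_eq.symm⟩
  rwa [Λ.rng_comp b y hby] at hxc

theorem seg_spec {a : Λ.Mor} {m n : Fin k → ℕ} (hmn : m ≤ n) (hn : n ≤ Λ.deg a) :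
    Λ.deg (Λ.seg a m n) = n - m ∧ ∃ x y : Λ.Mor,
      Λ.deg x = m ∧ Λ.src x = Λ.rng (Λ.seg a m n) ∧ Λ.src (Λ.seg a m n) = Λ.rng y ∧
      a = Λ.comp x (Λ.comp (Λ.seg a m n) y) := by
  have h := Λ.exists_comp_comp hmn hn
  rw [seg, dif_pos h]
  exact h.choose_spec

theorem seg_eq {a b x y : Λ.Mor} {m n : Fin k → ℕ} (hx : Λ.deg x = m)
    (hb : Λ.deg b = n - m) (hxb : Λ.src x = Λ.rng b) (hby : Λ.src b = Λ.rng y)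
    (ha : a = Λ.comp x (Λ.comp b y)) : Λ.seg a m n = b := by
  have h : ∃ b : Λ.Mor, Λ.deg b = n - m ∧ ∃ x y : Λ.Mor,
      Λ.deg x = m ∧ Λ.src x = Λ.rng b ∧ Λ.src b = Λ.rng y ∧
      a = Λ.comp x (Λ.comp b y) := ⟨b, hb, x, y, hx, hxb, hby, ha⟩
  rw [seg, dif_pos h]
  obtain ⟨hb', x', y', hx', hxb', hby', ha'⟩ := h.choose_spec
  have hcomp := (Λ.eq_and_eq_of_comp_eq (by rwa [Λ.rng_comp _ _ hby'])
    (by rwa [Λ.rng_comp _ _ hby]) (hx'.trans hx.symm) (ha'.symm.trans ha)).2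
  exact (Λ.eq_and_eq_of_comp_eq hby' hby (hb'.trans hb.symm) hcomp).1

theorem seg_comp_comp {α a β : Λ.Mor} {m n : Fin k → ℕ} (hα : Λ.src α = Λ.rng a)
    (hβ : Λ.rng β = Λ.src a) (hmn : m ≤ n) (hn : n ≤ Λ.deg a) :
    Λ.seg (Λ.comp α (Λ.comp a β)) (m + Λ.deg α) (n + Λ.deg α) = Λ.seg a m n := by
  obtain ⟨hdeg, x, y, hx, hxb, hby, ha⟩ := Λ.seg_spec hmn hn
  set b := Λ.seg a m n
  have hx_by : Λ.src x = Λ.rng (Λ.comp b y) := by rwa [Λ.rng_comp _ _ hby]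
  have hαx : Λ.src α = Λ.rng x := by rw [hα, ha, Λ.rng_comp _ _ hx_by]
  have hyβ : Λ.src y = Λ.rng β := by rw [hβ, ha, Λ.src_comp _ _ hx_by, Λ.src_comp _ _ hby]
  have hb_yβ : Λ.src b = Λ.rng (Λ.comp y β) := by rwa [Λ.rng_comp _ _ hyβ]
  have hby_β : Λ.src (Λ.comp b y) = Λ.rng β := by rwa [Λ.src_comp _ _ hby]
  have hx_byβ : Λ.src x = Λ.rng (Λ.comp b (Λ.comp y β)) := by rwa [Λ.rng_comp _ _ hb_yβ]
  apply Λ.seg_eq (x := Λ.comp α x) (y := Λ.comp y β)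
  · rw [Λ.deg_comp _ _ hαx, hx, add_comm]
  · rw [hdeg, add_tsub_add_eq_tsub_right]
  · rwa [Λ.src_comp _ _ hαx]
  · exact hb_yβ
  · rw [ha, Λ.comp_assoc _ _ _ hx_by hby_β, Λ.comp_assoc _ _ _ hby hyβ,
      Λ.comp_assoc _ _ _ hαx hx_byβ]

end Factorization

section FloorCeil

theorem fl_apply (t : Fin k → ℝ) (i : Fin k) : fl t i = ⌊t i⌋₊ := Int.floor_toNat _

theorem ce_apply (t : Fin k → ℝ) (i : Fin k) : ce t i = ⌈t i⌉₊ := Int.ceil_toNat _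

theorem frac_apply (t : Fin k → ℝ) (i : Fin k) : frac t i = t i - ⌊t i⌋₊ := by
  rw [frac, Int.floor_toNat]

theorem fl_le_ce (t : Fin k → ℝ) : fl t ≤ ce t := fun i => by
  rw [fl_apply, ce_apply]
  exact Nat.floor_le_ceil _

theorem ce_le_fl_add_one (t : Fin k → ℝ) : ce t ≤ fl t + 1 := fun i => by
  rw [Pi.add_apply, fl_apply, ce_apply]
  exact Nat.ceil_le_floor_add_one _

theorem ce_le {t : Fin k → ℝ} {d : Fin k → ℕ} (h : ∀ i, t i ≤ d i) : ce t ≤ d := fun i => by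
  rw [ce_apply]
  exact Nat.ceil_le.2 (h i)

theorem frac_mem {t : Fin k → ℝ} (ht : ∀ i, 0 ≤ t i) (i : Fin k) :
    0 ≤ frac t i ∧ frac t i ≤ ((ce t - fl t) i : ℝ) := by
  rw [Pi.sub_apply, Nat.cast_sub (fl_le_ce t i), frac_apply, fl_apply, ce_apply]
  exact ⟨sub_nonneg.2 (Nat.floor_le (ht i)), sub_le_sub_right (Nat.le_ceil _) _⟩

variable {s t : Fin k → ℝ} {c : Fin k → ℕ}

theorem fl_of_eq_add (ht : ∀ i, 0 ≤ t i) (hs : ∀ i, s i = t i + c i) : fl s = fl t + c :=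
  funext fun i => by rw [Pi.add_apply, fl_apply, fl_apply, hs, Nat.floor_add_natCast (ht i)]

theorem ce_of_eq_add (ht : ∀ i, 0 ≤ t i) (hs : ∀ i, s i = t i + c i) : ce s = ce t + c :=
  funext fun i => by rw [Pi.add_apply, ce_apply, ce_apply, hs, Nat.ceil_add_natCast (ht i)]

theorem frac_of_eq_add (ht : ∀ i, 0 ≤ t i) (hs : ∀ i, s i = t i + c i) : frac s = frac t :=
  funext fun i => by
    rw [frac_apply, frac_apply, hs, Nat.floor_add_natCast (ht i), Nat.cast_add]
    ring

end FloorCeil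

variable (Λ : KGraph k)

def ShiftRel : Λ.Points → Λ.Points → Prop := fun p q =>
  Λ.deg q.1 ≤ 1 ∧
    ∃ α β : Λ.Mor, Λ.src α = Λ.rng q.1 ∧ Λ.rng β = Λ.src q.1 ∧
      p.1 = Λ.comp α (Λ.comp q.1 β) ∧
      (∀ i, p.2.1 i = q.2.1 i + (Λ.deg α i : ℝ))

theorem ce_le_deg (p : Λ.Points) : ce p.2.1 ≤ Λ.deg p.1 :=
  ce_le fun i => (p.2.2 i).2

theorem ptRel_of_shiftRel {p q : Λ.Points} (h : Λ.ShiftRel p q) : Λ.ptRel p q := by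
  obtain ⟨-, α, β, hα, hβ, hp, hpq⟩ := h
  have hq : ∀ i, 0 ≤ q.2.1 i := fun i => (q.2.2 i).1
  refine ⟨?_, frac_of_eq_add hq hpq⟩
  rw [fl_of_eq_add hq hpq, ce_of_eq_add hq hpq, hp]
  exact Λ.seg_comp_comp hα hβ (fl_le_ce _) (Λ.ce_le_deg q)

noncomputable def normalForm (p : Λ.Points) : Λ.Points :=
  ⟨Λ.seg p.1 (fl p.2.1) (ce p.2.1), frac p.2.1, fun i => by
    rw [(Λ.seg_spec (fl_le_ce _) (Λ.ce_le_deg p)).1]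
    exact frac_mem (fun i => (p.2.2 i).1) i⟩

theorem normalForm_eq_of_ptRel {p q : Λ.Points} (h : Λ.ptRel p q) :
    Λ.normalForm p = Λ.normalForm q :=
  Sigma.subtype_ext h.1 h.2

theorem shiftRel_normalForm (p : Λ.Points) : Λ.ShiftRel p (Λ.normalForm p) := by
  obtain ⟨hdeg, x, y, hx, hxb, hby, hp⟩ := Λ.seg_spec (fl_le_ce p.2.1) (Λ.ce_le_deg p)
  refine ⟨?_, x, y, hxb, hby.symm, hp, fun i => ?_⟩
  · rw [normalForm, hdeg]
    exact tsub_le_iff_left.2 (ce_le_fl_add_one _)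
  · show p.2.1 i = frac p.2.1 i + (Λ.deg x i : ℝ)
    rw [hx, frac_apply, fl_apply, sub_add_cancel]

end KGraph

/-- The equivalence relation `∼` on `⨆_{λ ∈ Λ} {λ} × [0, d(λ)]`
defined by `(μ,s) ∼ (ν,t) ⟺ μ(⌊s⌋,⌈s⌉) = ν(⌊t⌋,⌈t⌉) ∧ s - ⌊s⌋ = t - ⌊t⌋` is
generated, as an equivalence relation, by the set of pairs
`{((αλβ, t + d(α)), (λ, t)) : d(λ) ≤ 1_k, s(α) = r(λ), r(β) = s(λ), t ∈ [0, d(λ)]}`. -/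
theorem topological_realization_relation_generated
    (k : ℕ) (Λ : KGraph k) :
    Λ.ptRel = Relation.EqvGen (fun p q : Λ.Points =>
      Λ.deg q.1 ≤ 1 ∧
      ∃ α β : Λ.Mor, Λ.src α = Λ.rng q.1 ∧ Λ.rng β = Λ.src q.1 ∧
        p.1 = Λ.comp α (Λ.comp q.1 β) ∧
        (∀ i, p.2.1 i = q.2.1 i + (Λ.deg α i : ℝ))) := by
  change Λ.ptRel = Relation.EqvGen Λ.ShiftRel
  ext p q
  constructor
  · intro h
    have hp := Relation.EqvGen.rel _ _ (Λ.shiftRel_normalForm p)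
    have hq := Relation.EqvGen.rel _ _ (Λ.shiftRel_normalForm q)
    rw [← Λ.normalForm_eq_of_ptRel h] at hq
    exact hp.trans _ _ _ hq.symm
  · intro h
    exact Λ.ptSetoid.iseqv.eqvGen_iff.1
      (Relation.EqvGen.mono (fun _ _ => Λ.ptRel_of_shiftRel) _ _ h)
end

section
/- Let G be a connected groupoid, i.e. a small groupoid such that vGu ≠ ∅ for all units u, v. Let S ⊆ G × G be a set of pairs of parallel morphisms (i.e. s(α) = s(β) and r(α) = r(β) for all (α,β) ∈ S), let R be the congruence relation on G generated by S, let H = G/R be the quotient groupoid and Q : G → H the quotient functor. Fix a unit u of G, and for each unit v choose κ_v ∈ vGu with κ_u = u. Let K be the normal subgroup of the isotropy group G(u) = uGu generated by {κ_{r(α)}⁻¹ α β⁻¹ κ_{r(α)} : (α,β) ∈ S}. Then the isotropy group H(u) of the quotient is isomorphic to G(u)/K; more precisely, Q restricts to a surjective group homomorphism G(u) → H(u) whose kernel is K. -/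
/-!
Transporting along the chosen arrows `κ_v : u ⟶ v`, every arrow `f : a ⟶ b` gives a loop
`κ_a f κ_b⁻¹` at `u`, and this is multiplicative along composable arrows. Hence "having the same
loop modulo `K`" is a congruence on `G`; it contains `S`, because the generators of `K` are exactly
the quotients of the loops of `α` and `β` for `(α, β) ∈ S`. So the congruence generated by `S`
only identifies loops at `u` (where `κ_u = 1`) that agree modulo `K`. Conversely the quotient
functor kills every generator of `K`, hence `K`.
-/

open CategoryTheory

namespace CategoryTheory

theorem Quotient.rel_of_functor_map_eq {C : Type*} [Category* C] {r r' : HomRel C}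
    [Congruence r'] (hle : ∀ ⦃X Y : C⦄ (f g : X ⟶ Y), r f g → r' f g)
    {X Y : C} {f g : X ⟶ Y} (h : (Quotient.functor r).map f = (Quotient.functor r).map g) :
    r' f g := by
  let L := Quotient.lift r (Quotient.functor r') fun _ _ _ _ hfg => Quotient.sound r' (hle _ _ hfg)
  have hL := congrArg L.map h
  rwa [Quotient.lift_map_functor_map, Quotient.lift_map_functor_map,
    Quotient.functor_map_eq_iff] at hL

namespace Groupoid

variable {G : Type*} [Groupoid G] {u : G} (κ : ∀ v : G, u ⟶ v)

def vertexLoop {a b : G} (f : a ⟶ b) : u ⟶ u :=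
  κ a ≫ f ≫ Groupoid.inv (κ b)

theorem vertexLoop_comp {a b c : G} (f : a ⟶ b) (g : b ⟶ c) :
    vertexLoop κ (f ≫ g) = vertexLoop κ f * vertexLoop κ g := by
  simp [vertexLoop]

theorem vertexLoop_of_eq_id (hκu : κ u = 𝟙 u) (γ : u ⟶ u) : vertexLoop κ γ = γ := by
  simp [vertexLoop, hκu]

theorem inv_vertexLoop_mul_vertexLoop {a b : G} (α β : a ⟶ b) :
    (vertexLoop κ β)⁻¹ * vertexLoop κ α = κ b ≫ Groupoid.inv β ≫ α ≫ Groupoid.inv (κ b) := by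
  simp [vertexLoop]

def vertexLoopRel (K : Subgroup (u ⟶ u)) : HomRel G :=
  fun _ _ f g => (vertexLoop κ f : (u ⟶ u) ⧸ K) = vertexLoop κ g

instance (K : Subgroup (u ⟶ u)) [K.Normal] : Congruence (vertexLoopRel κ K) where
  equivalence := ⟨fun _ => rfl, Eq.symm, Eq.trans⟩
  comp_left f _ _ h := by
    simp only [vertexLoopRel, vertexLoop_comp, QuotientGroup.mk_mul] at h ⊢
    rw [h]
  comp_right g h := by
    simp only [vertexLoopRel, vertexLoop_comp, QuotientGroup.mk_mul] at h ⊢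
    rw [h]

def relators (S : HomRel G) : Set (u ⟶ u) :=
  { x | ∃ (a b : G) (α β : a ⟶ b), S α β ∧ x = κ b ≫ Groupoid.inv β ≫ α ≫ Groupoid.inv (κ b) }

variable (S : HomRel G)

theorem relators_subset_ker : relators κ S ⊆ ((Quotient.functor S).mapVertexGroup u).ker := by
  rintro _ ⟨a, b, α, β, hαβ, rfl⟩
  rw [SetLike.mem_coe, MonoidHom.mem_ker, Functor.mapVertexGroup_apply]
  simp [Quotient.sound S hαβ]

theorem le_vertexLoopRel_normalClosure_relators :
    ∀ ⦃X Y : G⦄ (f g : X ⟶ Y), S f g →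
      vertexLoopRel κ (Subgroup.normalClosure (relators κ S)) f g := by
  intro _ _ α β hαβ
  refine (QuotientGroup.eq.mpr (Subgroup.subset_normalClosure ?_)).symm
  exact ⟨_, _, α, β, hαβ, inv_vertexLoop_mul_vertexLoop κ α β⟩

theorem ker_mapVertexGroup_quotientFunctor (hκu : κ u = 𝟙 u) :
    ((Quotient.functor S).mapVertexGroup u).ker = Subgroup.normalClosure (relators κ S) := by
  refine le_antisymm (fun γ hγ => ?_)
    (Subgroup.normalClosure_le_normal (relators_subset_ker κ S))
  have hrel : vertexLoopRel κ (Subgroup.normalClosure (relators κ S)) γ (𝟙 u) :=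
    Quotient.rel_of_functor_map_eq (le_vertexLoopRel_normalClosure_relators κ S)
      (hγ.trans ((Quotient.functor S).map_id u).symm)
  rw [vertexLoopRel, vertexLoop_of_eq_id κ hκu, vertexLoop_of_eq_id κ hκu] at hrel
  exact (QuotientGroup.eq_one_iff γ).mp hrel

end Groupoid

end CategoryTheory

theorem isotropy_of_quotient_groupoid_general
    {G : Type} [Groupoid G]
    (S : HomRel G) (u : G)
    (κ : ∀ v : G, u ⟶ v) (hκu : κ u = 𝟙 u) :
    Function.Surjective
      (fun γ : u ⟶ u => (Quotient.functor S).map γ) ∧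
    ∀ γ : u ⟶ u,
      (Quotient.functor S).map γ = 𝟙 ((Quotient.functor S).obj u) ↔
      γ ∈ Subgroup.normalClosure
        { x : u ⟶ u | ∃ (a b : G) (α β : a ⟶ b), S α β ∧
            x = κ b ≫ Groupoid.inv β ≫ α ≫ Groupoid.inv (κ b) } := by
  exact ⟨(Quotient.functor S).map_surjective,
    SetLike.ext_iff.mp (Groupoid.ker_mapVertexGroup_quotientFunctor κ S hκu)⟩

/-- Let `G` be a connected groupoid, `S` a set of pairs of
parallel morphisms, `R` the congruence generated by `S` (so that the quotient
groupoid `H = G/R` is `CategoryTheory.Quotient S`, whose hom-sets are the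
quotients of those of `G` by the congruence generated by `S`, and the quotient
functor is `Quotient.functor S`).  Fix a unit `u` and `κ_v ∈ vGu` for each unit
`v`, with `κ_u = 𝟙 u`, and let `K` be the normal subgroup of the isotropy group
`G(u) = uGu` generated by `{κ_{r(α)}⁻¹ α β⁻¹ κ_{r(α)} : (α,β) ∈ S}`.  Then the
quotient functor restricts to a surjective (automatically multiplicative) map
`G(u) → H(u)` whose kernel is `K`; that is, `H(u) ≅ G(u)/K`. -/
theorem isotropy_of_quotient_groupoid
    {G : Type} [Groupoid G]
    (hconn : ∀ a b : G, Nonempty (a ⟶ b))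
    (S : HomRel G) (u : G)
    (κ : ∀ v : G, u ⟶ v) (hκu : κ u = 𝟙 u) :
    Function.Surjective
      (fun γ : u ⟶ u => (Quotient.functor S).map γ) ∧
    ∀ γ : u ⟶ u,
      (Quotient.functor S).map γ = 𝟙 ((Quotient.functor S).obj u) ↔
      γ ∈ Subgroup.normalClosure
        { x : u ⟶ u | ∃ (a b : G) (α β : a ⟶ b), S α β ∧
            x = κ b ≫ Groupoid.inv β ≫ α ≫ Groupoid.inv (κ b) } :=
  isotropy_of_quotient_groupoid_general S u κ hκu
end

section
/- Let φ, ψ : Λ → Γ be morphisms of k-graphs. If the induced continuous maps on topological realizations coincide, φ̃ = ψ̃ : X_Λ → X_Γ, then φ = ψ. In other words, the topological realization functor is faithful. -/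
namespace KGraph

variable {k : ℕ} (Λ : KGraph k)

theorem eq_of_comp_eq_comp {a b c d : Λ.Mor} (hac : Λ.deg a = Λ.deg c)
    (hbd : Λ.deg b = Λ.deg d) (hab : Λ.src a = Λ.rng b) (hcd : Λ.src c = Λ.rng d)
    (h : Λ.comp a b = Λ.comp c d) : a = c ∧ b = d := by
  obtain ⟨_, _, huniq⟩ := Λ.factor (Λ.comp a b) (Λ.deg a) (Λ.deg b) (Λ.deg_comp a b hab)
  have hcd' := huniq (c, d) ⟨hac.symm, hbd.symm, hcd, h.symm⟩
  have hab' := huniq (a, b) ⟨rfl, rfl, hab, rfl⟩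
  exact Prod.ext_iff.mp (hab'.trans hcd'.symm)

theorem seg_zero_deg (a : Λ.Mor) : Λ.seg a 0 (Λ.deg a) = a := by
  have hex : ∃ b : Λ.Mor, Λ.deg b = Λ.deg a - 0 ∧ ∃ x y : Λ.Mor,
      Λ.deg x = 0 ∧ Λ.src x = Λ.rng b ∧ Λ.src b = Λ.rng y ∧
      a = Λ.comp x (Λ.comp b y) :=
    ⟨a, by simp, Λ.rng a, Λ.src a, Λ.deg_rng a, Λ.src_rng a, (Λ.rng_src a).symm,
      by rw [Λ.comp_id, Λ.id_comp]⟩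
  rw [seg, dif_pos hex]
  obtain ⟨hdb, x, y, hdx, hxb, hby, ha⟩ := hex.choose_spec
  set b := hex.choose
  rw [tsub_zero] at hdb
  have hx_by : Λ.src x = Λ.rng (Λ.comp b y) := by rw [Λ.rng_comp b y hby, hxb]
  have hdy : Λ.deg y = 0 := by
    have := congrArg Λ.deg ha
    rw [Λ.deg_comp x _ hx_by, Λ.deg_comp b y hby, hdx, hdb, zero_add] at this
    exact (left_eq_add.mp this)
  have hby_a : Λ.comp b y = a :=
    (Λ.eq_of_comp_eq_comp (by rw [hdx, Λ.deg_rng])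
      (by rw [Λ.deg_comp b y hby, hdb, hdy, add_zero])
      hx_by (Λ.src_rng a) (ha.symm.trans (Λ.id_comp a).symm)).2
  exact (Λ.eq_of_comp_eq_comp (by rw [hdb]) (by rw [hdy, Λ.deg_src]) hby
    (Λ.rng_src a).symm (hby_a.trans (Λ.comp_id a).symm)).1

theorem fl_half {d : Fin k → ℕ} (hd : d ≤ 1) : fl (fun i => (d i : ℝ) / 2) = 0 := by
  funext i
  rcases Nat.le_one_iff_eq_zero_or_eq_one.mp (hd i) with h | h <;>
    norm_num [fl, h, Int.floor_eq_zero_iff]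

theorem ce_half {d : Fin k → ℕ} (hd : d ≤ 1) : ce (fun i => (d i : ℝ) / 2) = d := by
  funext i
  rcases Nat.le_one_iff_eq_zero_or_eq_one.mp (hd i) with h | h <;>
    norm_num [ce, h, Int.ceil_eq_iff]

theorem half_mem_cube (d : Fin k → ℕ) : ∀ i, 0 ≤ (d i : ℝ) / 2 ∧ (d i : ℝ) / 2 ≤ d i :=
  fun i => ⟨by positivity, half_le_self (Nat.cast_nonneg _)⟩

theorem eq_of_pt_half_eq {a b : Λ.Mor} {d : Fin k → ℕ} (hd : d ≤ 1)
    (ha : Λ.deg a = d) (hb : Λ.deg b = d)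
    {hta : ∀ i, 0 ≤ (d i : ℝ) / 2 ∧ (d i : ℝ) / 2 ≤ Λ.deg a i}
    {htb : ∀ i, 0 ≤ (d i : ℝ) / 2 ∧ (d i : ℝ) / 2 ≤ Λ.deg b i}
    (h : Λ.pt a (fun i => (d i : ℝ) / 2) hta = Λ.pt b (fun i => (d i : ℝ) / 2) htb) :
    a = b := by
  have hseg := (Quotient.exact h).1
  dsimp only at hseg
  rwa [fl_half hd, ce_half hd, ← ha, seg_zero_deg, ha, ← hb, seg_zero_deg] at hseg

end KGraph

namespace KGraphHom

variable {k : ℕ} {Λ Γ : KGraph k}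

theorem ext_of_deg_le_one {φ ψ : KGraphHom Λ Γ}
    (h : ∀ a, Λ.deg a ≤ 1 → φ.toFun a = ψ.toFun a) : φ = ψ := by
  ext a
  induction hn : ∑ i, Λ.deg a i using Nat.strong_induction_on generalizing a with
  | _ n ih =>
  by_cases ha : Λ.deg a ≤ 1
  · exact h a ha
  obtain ⟨i, hi⟩ : ∃ i, 1 < Λ.deg a i := by simpa [Pi.le_def] using ha
  have hsingle : Pi.single i 1 ≤ Λ.deg a ∧ (Pi.single i 1 : Fin k → ℕ) ≤ 1 := by
    constructor <;> intro j <;> rcases eq_or_ne j i with rfl | hj <;> simp [*, hi.le]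
  obtain ⟨⟨b, c⟩, ⟨hb, -, hbc, rfl⟩, -⟩ :=
    Λ.factor a _ _ (add_tsub_cancel_of_le hsingle.1).symm
  have hn' : n = 1 + ∑ i, Λ.deg c i := by
    simp only [← hn, Λ.deg_comp b c hbc, Pi.add_apply, Finset.sum_add_distrib, hb]
    simp
  rw [φ.map_comp b c hbc, ψ.map_comp b c hbc, h b (hb ▸ hsingle.2),
    ih _ (by omega) c rfl]

end KGraphHom

/-- If `φ, ψ : Λ → Γ` are `k`-graph morphisms whose induced
continuous maps `φ̃, ψ̃ : X_Λ → X_Γ` (characterized by `φ̃([λ,t]) = [φ(λ),t]`)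
coincide, then `φ = ψ`: topological realization is a faithful functor. -/
theorem realization_faithful
    {k : ℕ} (Λ Γ : KGraph k) (φ ψ : KGraphHom Λ Γ)
    (F G : C(Λ.Real, Γ.Real))
    (hF : ∀ (a : Λ.Mor) (t : Fin k → ℝ)
      (hb : ∀ i, 0 ≤ t i ∧ t i ≤ (Λ.deg a i : ℝ))
      (hb' : ∀ i, 0 ≤ t i ∧ t i ≤ (Γ.deg (φ.toFun a) i : ℝ)),
      F (Λ.pt a t hb) = Γ.pt (φ.toFun a) t hb')
    (hG : ∀ (a : Λ.Mor) (t : Fin k → ℝ)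
      (hb : ∀ i, 0 ≤ t i ∧ t i ≤ (Λ.deg a i : ℝ))
      (hb' : ∀ i, 0 ≤ t i ∧ t i ≤ (Γ.deg (ψ.toFun a) i : ℝ)),
      G (Λ.pt a t hb) = Γ.pt (ψ.toFun a) t hb')
    (h : ∀ x : Λ.Real, F x = G x) :
    φ = ψ := by
  refine KGraphHom.ext_of_deg_le_one fun a ha => ?_
  have hcube := KGraph.half_mem_cube (Λ.deg a)
  have hFG := h (Λ.pt a _ hcube)
  rw [hF a _ _ (by simpa only [φ.map_deg] using hcube),
    hG a _ _ (by simpa only [ψ.map_deg] using hcube)] at hFG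
  exact Γ.eq_of_pt_half_eq ha (φ.map_deg a) (ψ.map_deg a) hFG
end
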